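/- For every odd m ≥ 11, none of the four values 2, m-2, (m+1)/2 (when it is an integer and odd), (m-1)/2 (when it is an integer and odd) can be written as 2k+1 with 2kl+k+l ∈ {m, m-1} for positive integers k, l. In particular, taking the case 2k+1 = 2: there is no integer k with 2k+1 = 2. -/
import Mathlib


theorem stmt_14 (m : ℕ) (hodd : Odd m) (hm : 11 ≤ m) :
    (¬ ∃ k : ℕ, 2 * k + 1 = 2) ∧
    (∀ k l : ℕ, 0 < k → 0 < l →
      (2 * k + 1 = m - 2 ∨ 2 * k + 1 = (m + 1) / 2 ∨ 2 * k + 1 = (m - 1) / 2) →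
      2 * k * l + k + l ≠ m ∧ 2 * k * l + k + l ≠ m - 1) := by
  obtain ⟨n, rfl⟩ := hodd
  refine ⟨by rintro ⟨k, hk⟩; omega, ?_⟩
  intro k l hk hl h
  rcases Nat.lt_or_ge l 2 with hl2 | hl2
  · have hl1 : l = 1 := by omega
    subst hl1
    simp only [mul_one]
    omega
  · have hkl : 2 * k ≤ k * l := by
      calc 2 * k = k * 2 := by ring
        _ ≤ k * l := Nat.mul_le_mul_left k hl2
    have hq : 2 * k * l = 2 * (k * l) := by ring
    rw [hq]
    generalize hgen : k * l = q at hkl ⊢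
    omega
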